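/- The smallest order of a triangle-free graph G with χ_1(G) = 3 is 9; that is, every triangle-free graph on at most 8 vertices has χ_1 ≤ 2, and there exists a triangle-free graph on 9 vertices with χ_1 = 3. -/

import Mathlib

/-!
If every vertex has degree at most `3`, Lovász's argument applies: a 2-colouring minimising the
number of monochromatic edges has no vertex with two neighbours of its own colour, since
recolouring such a vertex would remove a monochromatic edge.

Otherwise let `v` have maximum degree `Δ ≥ 4`. Its neighbourhood `N` is independent, and the set
`R` of the remaining vertices other than `v` has at most three elements. If `R` induces maximum
degree at most `1`, take the classes `N` and `R ∪ {v}`. If not, `R` is a path `a - u - b`,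
`Δ = 4`, and `u` has at most two neighbours in `N`; moving one of them, `x`, across gives the
classes `(N \ {x}) ∪ {u}` and `{v, a, b, x}`.

For the lower bound, the blow-up of the 5-cycle doubling four of its vertices is triangle-free and
has no such 2-colouring, which is checked by enumeration.
-/

open SimpleGraph

/-- A set `U` is `k`-independent in `G` if every vertex of `U` has at most `k`
neighbours inside `U` (i.e. the induced subgraph has maximum degree at most `k`). -/
def KIndep {V : Type*} (G : SimpleGraph V) (k : ℕ) (U : Set V) : Prop :=
  ∀ v ∈ U, {w | w ∈ U ∧ G.Adj v w}.ncard ≤ k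

/-- `G` is `(m,k)`-colourable: the vertices can be coloured with `m` colours so that
every colour class is `k`-independent. -/
def DefColorable {V : Type*} (G : SimpleGraph V) (m k : ℕ) : Prop :=
  ∃ c : V → Fin m, ∀ i : Fin m, KIndep G k {v | c v = i}

/-- The `k`-defective chromatic number: the least `m` such that `G` is `(m,k)`-colourable. -/
noncomputable def defChrom {V : Type*} (G : SimpleGraph V) (k : ℕ) : ℕ :=
  sInf {m | DefColorable G m k}

open Finset Function

section KIndep

variable {V : Type*} {G : SimpleGraph V} {k : ℕ} {I : Set V}

theorem kIndep_zero_iff [Finite V] : KIndep G 0 I ↔ G.IsIndepSet I := by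
  simp only [KIndep, Nat.le_zero, Set.ncard_eq_zero (Set.toFinite _),
    Set.eq_empty_iff_forall_notMem]
  exact ⟨fun h v hv w hw _ hvw => h v hv w ⟨hw, hvw⟩,
    fun h v hv w ⟨hw, hvw⟩ => h hv hw (G.ne_of_adj hvw) hvw⟩

theorem KIndep.mono {k' : ℕ} (hI : KIndep G k I) (hk : k ≤ k') : KIndep G k' I :=
  fun v hv => (hI v hv).trans hk

theorem setOf_mem_insert_adj_self (u : V) :
    {w | w ∈ insert u I ∧ G.Adj u w} = {w | w ∈ I ∧ G.Adj u w} := by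
  ext w
  refine ⟨?_, fun ⟨hw, huw⟩ => ⟨Or.inr hw, huw⟩⟩
  rintro ⟨rfl | hw, huw⟩
  exacts [absurd huw (G.loopless.irrefl _), ⟨hw, huw⟩]

theorem kIndep_insert [Finite V] {u : V} (hI : KIndep G k I)
    (hu : {w | w ∈ I ∧ G.Adj u w}.ncard ≤ k + 1) : KIndep G (k + 1) (insert u I) := by
  rintro v (rfl | hv)
  · rwa [setOf_mem_insert_adj_self]
  · calc {w | w ∈ insert u I ∧ G.Adj v w}.ncard
        ≤ (insert u {w | w ∈ I ∧ G.Adj v w}).ncard := by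
          refine Set.ncard_le_ncard fun w ⟨hw, hvw⟩ => ?_
          rcases hw with rfl | hw
          exacts [Or.inl rfl, Or.inr ⟨hw, hvw⟩]
      _ ≤ k + 1 := (Set.ncard_insert_le _ _).trans (by simpa using hI v hv)

theorem kIndep_insert_of_forall_not_adj [Finite V] {u : V} (hI : KIndep G k I)
    (hu : ∀ w ∈ I, ¬ G.Adj u w) : KIndep G k (insert u I) := by
  rintro v (rfl | hv)
  · rw [setOf_mem_insert_adj_self, (Set.ncard_eq_zero (Set.toFinite _)).mpr]
    exacts [Nat.zero_le k, Set.eq_empty_of_forall_notMem fun w ⟨hw, hvw⟩ => hu w hw hvw]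
  · calc {w | w ∈ insert u I ∧ G.Adj v w}.ncard = {w | w ∈ I ∧ G.Adj v w}.ncard := by
          congr 1
          ext w
          refine ⟨?_, fun ⟨hw, hvw⟩ => ⟨Or.inr hw, hvw⟩⟩
          rintro ⟨rfl | hw, hvw⟩
          exacts [absurd hvw.symm (hu v hv), ⟨hw, hvw⟩]
      _ ≤ k := hI v hv

end KIndep

section DefColorable

variable {V : Type*} {G : SimpleGraph V} {k : ℕ}

theorem defColorable_two_of_kIndep_compl {A : Set V} (hA : KIndep G k A) (hAc : KIndep G k Aᶜ) :
    DefColorable G 2 k := by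
  classical
  refine ⟨fun v => if v ∈ A then 0 else 1, fun i => ?_⟩
  fin_cases i
  · convert hA using 1
    ext v
    by_cases hv : v ∈ A <;> simp [hv]
  · convert hAc using 1
    ext v
    by_cases hv : v ∈ A <;> simp [hv]

theorem DefColorable.mono {m m' : ℕ} (h : m ≤ m') (hc : DefColorable G m k) :
    DefColorable G m' k := by
  obtain ⟨c, hc⟩ := hc
  refine ⟨Fin.castLE h ∘ c, fun i => ?_⟩
  by_cases hi : (i : ℕ) < m
  · convert hc ⟨i, hi⟩ using 1
    ext v
    simp [Fin.ext_iff]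
  · rintro v rfl
    exact absurd (c v).isLt hi

theorem defChrom_eq_succ {m : ℕ} (h : DefColorable G (m + 1) k) (h' : ¬ DefColorable G m k) :
    defChrom G k = m + 1 :=
  (Nat.sInf_upward_closed_eq_succ_iff (fun _ _ hle (hc : DefColorable G _ k) => hc.mono hle) m).mpr
    ⟨h, h'⟩

end DefColorable

section SameColorDegree

variable {V α : Type*} [Fintype V] [DecidableEq α] (G : SimpleGraph V) [DecidableRel G.Adj]

def sameColorDegree (c : V → α) (v : V) : ℕ := #{w | G.Adj v w ∧ c w = c v}

theorem ncard_sameColorClass_adj (c : V → α) (v : V) :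
    {w | w ∈ {u | c u = c v} ∧ G.Adj v w}.ncard = sameColorDegree G c v := by
  rw [sameColorDegree, ← Set.ncard_coe_finset]
  congr 1
  ext w
  simp [and_comm]

theorem defColorable_iff_exists_sameColorDegree_le {m k : ℕ} :
    DefColorable G m k ↔ ∃ c : V → Fin m, ∀ v, sameColorDegree G c v ≤ k := by
  refine ⟨fun ⟨c, hc⟩ => ⟨c, fun v => ?_⟩, fun ⟨c, hc⟩ => ⟨c, fun i v hv => ?_⟩⟩
  · exact ncard_sameColorClass_adj G c v ▸ hc (c v) v rfl
  · obtain rfl : c v = i := hv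
    exact (ncard_sameColorClass_adj G c v).trans_le (hc v)

variable [DecidableEq V]

/-- Recolouring `v` changes `∑ u, sameColorDegree G c u` by twice the change at `v`, since every
monochromatic edge at `v` is counted once from each end. -/
theorem sum_sameColorDegree_update_add (c : V → α) (v : V) (j : α) :
    ∑ u, sameColorDegree G (update c v j) u + 2 * sameColorDegree G c v =
      ∑ u, sameColorDegree G c u + 2 * sameColorDegree G (update c v j) v := by
  set c' := update c v j
  let e (c : V → α) (u w : V) : ℤ := if G.Adj u w ∧ c w = c u then 1 else 0
  have hdeg (c : V → α) (u : V) : (sameColorDegree G c u : ℤ) = ∑ w, e c u w := by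
    rw [sameColorDegree, Finset.card_filter]
    push_cast
    rfl
  have hsymm (c : V → α) (u w : V) : e c u w = e c w u := by
    simp only [e, G.adj_comm, eq_comm]
  have hlocal (u w : V) : e c' u w - e c u w =
      (if u = v then e c' v w - e c v w else 0) + (if w = v then e c' u v - e c u v else 0) := by
    by_cases hu : u = v <;> by_cases hw : w = v
    · subst hu hw; simp [e]
    · simp [hu, hw]
    · simp [hu, hw]
    · simp [hu, hw, e, c', update_of_ne]
  have hsum : ∑ u, ∑ w, (e c' u w - e c u w) = 2 * ∑ w, (e c' v w - e c v w) := by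
    rw [Finset.sum_congr rfl fun u _ => Finset.sum_congr rfl fun w _ => hlocal u w]
    simp only [Finset.sum_add_distrib]
    rw [Finset.sum_comm (f := fun u w => if u = v then _ else _)]
    simp only [Finset.sum_ite_eq', Finset.mem_univ, if_true]
    simp only [hsymm _ _ v]
    ring
  zify
  simp only [hdeg, Finset.sum_sub_distrib] at hsum ⊢
  linarith

theorem sameColorDegree_update_self (c : V → α) (v : V) (j : α) :
    sameColorDegree G (update c v j) v = #{w ∈ G.neighborFinset v | c w = j} := by
  rw [sameColorDegree, neighborFinset_eq_filter, Finset.filter_filter, update_self]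
  refine congrArg _ (Finset.filter_congr fun w _ => and_congr_right fun hvw => ?_)
  rw [update_of_ne (G.ne_of_adj hvw).symm]

/-- Lovász: recolouring a vertex with more than `k` same-coloured neighbours by a colour carried
by at most `k` of its neighbours decreases `∑ v, sameColorDegree G c v`. -/
theorem defColorable_of_forall_degree_lt {m k : ℕ} (hdeg : ∀ v, G.degree v < m * (k + 1)) :
    DefColorable G m k := by
  rw [defColorable_iff_exists_sameColorDegree_le]
  have : Nonempty (V → Fin m) := by
    rcases isEmpty_or_nonempty V with hV | ⟨⟨v⟩⟩
    · infer_instance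
    · exact ⟨fun _ => ⟨0, Nat.pos_of_mul_pos_right (Nat.zero_lt_of_lt (hdeg v))⟩⟩
  obtain ⟨c, -, hmin⟩ :=
    exists_min_image univ (fun c : V → Fin m => ∑ v, sameColorDegree G c v) univ_nonempty
  refine ⟨c, fun v => ?_⟩
  by_contra! hv
  obtain ⟨j, -, hj⟩ :
      ∃ j ∈ (univ : Finset (Fin m)), #{w ∈ G.neighborFinset v | c w = j} < k + 1 :=
    exists_card_fiber_lt_of_card_lt_mul (by simpa using hdeg v)
  have hupdate := sum_sameColorDegree_update_add G c v j
  have hle : ∑ u, sameColorDegree G c u ≤ ∑ u, sameColorDegree G (update c v j) u :=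
    hmin (update c v j) (mem_univ _)
  rw [sameColorDegree_update_self] at hupdate
  omega

end SameColorDegree

section HighDegree

open Set

variable {V : Type*} {G : SimpleGraph V}

theorem ncard_neighborSet_eq_degree [Fintype V] [DecidableRel G.Adj] (v : V) :
    (G.neighborSet v).ncard = G.degree v := by
  rw [← card_neighborSet_eq_degree, ← Nat.card_eq_fintype_card, Nat.card_coe_set_eq]

theorem defColorable_two_one_of_univ_eq_path_union_neighborSet [Finite V] (hG : G.CliqueFree 3)
    {v u a b : V} (hcover : {v, u, a, b} ∪ G.neighborSet v = univ) (hu : ¬ G.Adj v u)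
    (ha : ¬ G.Adj v a) (hb : ¬ G.Adj v b) (hua : G.Adj u a) (hub : G.Adj u b) {S : Set V}
    (hST : S ⊆ G.neighborSet v ∩ G.neighborSet u) (hS : S.ncard ≤ 1)
    (hTS : ((G.neighborSet v ∩ G.neighborSet u) \ S).ncard ≤ 1) : DefColorable G 2 1 := by
  refine defColorable_two_of_kIndep_compl (A := insert u (G.neighborSet v \ S)) ?_ ?_
  · refine kIndep_insert (kIndep_zero_iff.mpr
      ((isIndepSet_neighborSet_of_triangleFree G hG v).mono sdiff_subset)) ?_
    refine (ncard_le_ncard ?_).trans hTS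
    rintro w ⟨⟨hvw, hwS⟩, huw⟩
    exact ⟨⟨hvw, huw⟩, hwS⟩
  · have hAc : (insert u (G.neighborSet v \ S))ᶜ = insert v ({a, b} ∪ S) := by
      ext w
      have hw : w ∈ {v, u, a, b} ∪ G.neighborSet v := hcover ▸ mem_univ w
      have hSv : ∀ x ∈ S, G.Adj v x := fun x hx => (hST hx).1
      have := G.ne_of_adj hua
      have := G.ne_of_adj hub
      simp only [mem_union, mem_insert_iff, mem_singleton_iff, mem_compl_iff, mem_sdiff,
        mem_neighborSet] at hw ⊢
      grind [G.loopless.irrefl v]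
    rw [hAc]
    refine kIndep_insert (kIndep_zero_iff.mpr
      ((isIndepSet_neighborSet_of_triangleFree G hG u).mono ?_)) ?_
    · rintro w ((rfl | rfl) | hwS)
      exacts [hua, hub, (hST hwS).2]
    · refine (ncard_le_ncard ?_).trans hS
      rintro w ⟨(rfl | rfl) | hwS, hvw⟩
      exacts [absurd hvw ha, absurd hvw hb, hwS]

theorem ncard_insert_insert_pair_union_neighborSet [Fintype V] [DecidableRel G.Adj] {v u a b : V}
    (hu : u ≠ v ∧ ¬ G.Adj v u) (ha : a ≠ v ∧ ¬ G.Adj v a) (hb : b ≠ v ∧ ¬ G.Adj v b)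
    (hua : u ≠ a) (hub : u ≠ b) (hab : a ≠ b) :
    ({v, u, a, b} ∪ G.neighborSet v).ncard = G.degree v + 4 := by
  rw [ncard_union_eq, ncard_neighborSet_eq_degree, ncard_insert_of_notMem, ncard_insert_of_notMem,
    ncard_pair hab, add_comm]
  · simpa using ⟨hua, hub⟩
  · simpa using ⟨hu.1.symm, ha.1.symm, hb.1.symm⟩
  · refine Set.disjoint_left.mpr ?_
    rintro w (rfl | rfl | rfl | rfl) hw
    exacts [G.loopless.irrefl _ hw, hu.2 hw, ha.2 hw, hb.2 hw]

theorem defColorable_two_one_of_path_outside_neighborSet [Fintype V] [DecidableRel G.Adj]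
    (hcard : Fintype.card V ≤ 8) (hG : G.CliqueFree 3) {v u a b : V}
    (hmax : ∀ w, G.degree w ≤ G.degree v) (h4 : 4 ≤ G.degree v) (hu : u ≠ v ∧ ¬ G.Adj v u)
    (ha : a ≠ v ∧ ¬ G.Adj v a) (hb : b ≠ v ∧ ¬ G.Adj v b) (hua : G.Adj u a) (hub : G.Adj u b)
    (hab : a ≠ b) :
    DefColorable G 2 1 := by
  have hX := ncard_insert_insert_pair_union_neighborSet hu ha hb (G.ne_of_adj hua)
    (G.ne_of_adj hub) hab
  have hXle : ({v, u, a, b} ∪ G.neighborSet v).ncard ≤ 8 :=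
    (ncard_le_card _).trans (Nat.card_eq_fintype_card (α := V) ▸ hcard)
  have hcover : {v, u, a, b} ∪ G.neighborSet v = univ := by
    refine eq_of_subset_of_ncard_le (subset_univ _) ?_
    rw [ncard_univ, Nat.card_eq_fintype_card]
    omega
  set T := G.neighborSet v ∩ G.neighborSet u
  have hT : T.ncard ≤ 2 := by
    have habT : (insert a (insert b T)).ncard = T.ncard + 2 := by
      rw [ncard_insert_of_notMem, ncard_insert_of_notMem]
      · exact fun hbT => hb.2 hbT.1
      · rintro (rfl | haT)
        exacts [hab rfl, ha.2 haT.1]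
    have hsub : insert a (insert b T) ⊆ G.neighborSet u := by
      rintro w (rfl | rfl | hwT)
      exacts [hua, hub, hwT.2]
    have hdeg_u := (ncard_le_ncard hsub).trans_eq (ncard_neighborSet_eq_degree u)
    have := hmax u
    omega
  obtain ⟨S, hST, hS, hTS⟩ : ∃ S ⊆ T, S.ncard ≤ 1 ∧ (T \ S).ncard ≤ 1 := by
    rcases T.eq_empty_or_nonempty with hT0 | ⟨x, hx⟩
    · exact ⟨∅, empty_subset _, by simp, by simp [hT0]⟩
    · refine ⟨{x}, singleton_subset_iff.mpr hx, by simp, ?_⟩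
      rw [ncard_sdiff_singleton_of_mem hx]
      omega
  exact defColorable_two_one_of_univ_eq_path_union_neighborSet hG hcover hu.2 ha.2 hb.2 hua hub
    hST hS hTS

theorem defColorable_two_one_of_degree_ge_four [Fintype V] [DecidableRel G.Adj]
    (hcard : Fintype.card V ≤ 8) (hG : G.CliqueFree 3) {v : V}
    (hmax : ∀ w, G.degree w ≤ G.degree v) (h4 : 4 ≤ G.degree v) : DefColorable G 2 1 := by
  by_cases hR : KIndep G 1 {w | w ≠ v ∧ ¬ G.Adj v w}
  · have hNc : (G.neighborSet v)ᶜ = insert v {w | w ≠ v ∧ ¬ G.Adj v w} := by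
      ext w
      by_cases hw : w = v <;> simp [hw]
    refine defColorable_two_of_kIndep_compl
      ((kIndep_zero_iff.mpr (isIndepSet_neighborSet_of_triangleFree G hG v)).mono zero_le_one) ?_
    rw [hNc]
    exact kIndep_insert_of_forall_not_adj hR fun w hw => hw.2
  · simp only [KIndep, not_forall, not_le] at hR
    obtain ⟨u, hu, hu2⟩ := hR
    obtain ⟨a, b, ⟨ha, hua⟩, ⟨hb, hub⟩, hab⟩ := (one_lt_ncard_iff).mp hu2
    exact defColorable_two_one_of_path_outside_neighborSet hcard hG hmax h4 hu ha hb hua hub hab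

end HighDegree

section Example

def pentagonBlowup : SimpleGraph (Fin 9) := (cycleGraph 5).comap fun i => ⟨i / 2, by omega⟩

instance : DecidableRel pentagonBlowup.Adj :=
  inferInstanceAs (DecidableRel ((cycleGraph 5).comap _).Adj)

theorem pentagonBlowup_cliqueFree : pentagonBlowup.CliqueFree 3 := by
  have h : ∀ t : Finset (Fin 9), ¬ pentagonBlowup.IsNClique 3 t := by decide +kernel
  exact h

theorem pentagonBlowup_defColorable : DefColorable pentagonBlowup 3 1 := by
  rw [defColorable_iff_exists_sameColorDegree_le]
  exact ⟨![0, 0, 1, 1, 0, 0, 1, 1, 2], by decide +kernel⟩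

theorem pentagonBlowup_not_defColorable : ¬ DefColorable pentagonBlowup 2 1 := by
  rw [defColorable_iff_exists_sameColorDegree_le]
  decide +kernel

end Example

/-- f(3,1) = 9: every triangle-free graph on at most 8 vertices has 1-defective
chromatic number at most 2, and there is a triangle-free graph on 9 vertices with
1-defective chromatic number 3. -/
theorem stmt8 :
    (∀ (V : Type) [Fintype V] (G : SimpleGraph V),
        Fintype.card V ≤ 8 → G.CliqueFree 3 → defChrom G 1 ≤ 2) ∧
    (∃ G : SimpleGraph (Fin 9), G.CliqueFree 3 ∧ defChrom G 1 = 3) := by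
  refine ⟨fun V _ G hcard hG => Nat.sInf_le ?_,
    ⟨pentagonBlowup, pentagonBlowup_cliqueFree,
      defChrom_eq_succ pentagonBlowup_defColorable pentagonBlowup_not_defColorable⟩⟩
  classical
  by_cases hdeg : ∀ v, G.degree v < 2 * (1 + 1)
  · exact defColorable_of_forall_degree_lt G hdeg
  · obtain ⟨v₀, hv₀⟩ := not_forall.mp hdeg
    obtain ⟨v, -, hmax⟩ := exists_max_image univ (fun v => G.degree v) ⟨v₀, mem_univ v₀⟩
    exact defColorable_two_one_of_degree_ge_four hcard hG (fun w => hmax w (mem_univ w))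
      ((not_lt.mp hv₀).trans (hmax v₀ (mem_univ v₀)))
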